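/- arXiv:2210.08914 — 3 statements merged into one kernel-verified Lean document; each statement's English description precedes it below -/
import Mathlib

section
/- If f : G → G' is a flag bijection between total graphs and f_V(v₁) = f_V(v₂) with both defined, then deg(v₁) = deg(v₂) = 0. -/
/-- A total graph: vertices, edges, and total source and target maps. -/
structure TGr : Type 1 where
  V : Type
  E : Type
  s : E → V
  t : E → V

/-- A graph morphism: a partial vertex map (modelled with `Option`) and a total
edge map. -/
structure TPreHom (G G' : TGr) : Type where
  fV : G.V → Option G'.V
  fE : G.E → G'.E

/-- Lax naturality: whenever the vertex map is defined on the source (resp.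
target) of an edge, it agrees with the source (resp. target) of the image
edge. -/
def TLax {G G' : TGr} (f : TPreHom G G') : Prop :=
  (∀ e v', f.fV (G.s e) = some v' → G'.s (f.fE e) = v') ∧
  (∀ e v', f.fV (G.t e) = some v' → G'.t (f.fE e) = v')

/-- Flag injectivity: the induced partial map on flags (pairs `(e, s e)` and
`(e, t e)`, defined where `fV` is defined on the vertex) is injective. -/
def TFlagInj {G G' : TGr} (f : TPreHom G G') : Prop :=
  (∀ e₁ e₂, (f.fV (G.s e₁)).isSome → (f.fV (G.s e₂)).isSome →
      f.fE e₁ = f.fE e₂ → f.fV (G.s e₁) = f.fV (G.s e₂) → e₁ = e₂) ∧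
  (∀ e₁ e₂, (f.fV (G.t e₁)).isSome → (f.fV (G.t e₂)).isSome →
      f.fE e₁ = f.fE e₂ → f.fV (G.t e₁) = f.fV (G.t e₂) → e₁ = e₂)

/-- Flag surjectivity: for every vertex `v` on which `fV` is defined, every
edge incident at `fV v` via source (resp. target) lies in the `fE`-image of the
edges incident at `v` via source (resp. target). -/
def TFlagSurj {G G' : TGr} (f : TPreHom G G') : Prop :=
  ∀ v v', f.fV v = some v' →
    (∀ e', G'.s e' = v' → ∃ e, G.s e = v ∧ f.fE e = e') ∧
    (∀ e', G'.t e' = v' → ∃ e, G.t e = v ∧ f.fE e = e')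

/-- A flag bijection: a (lax natural) graph morphism which is both flag
injective and flag surjective. -/
def TFlagBij {G G' : TGr} (f : TPreHom G G') : Prop :=
  TLax f ∧ TFlagInj f ∧ TFlagSurj f

open Classical in
/-- The degree of a vertex: the number of flags at it. -/
noncomputable def TGr.deg (G : TGr) (v : G.V) : ℕ :=
  Nat.card {e : G.E // G.s e = v} + Nat.card {e : G.E // G.t e = v}

lemma no_src {G G' : TGr} (f : TPreHom G G') (hf : TFlagBij f)
    (a b : G.V) (v' : G'.V) (ha : f.fV a = some v') (hb : f.fV b = some v')
    (hne : a ≠ b) : ∀ e, G.s e ≠ a := by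
  intro e he
  obtain ⟨⟨laxs, _⟩, ⟨injs, _⟩, surj⟩ := hf
  have hfa : f.fV (G.s e) = some v' := by rw [he]; exact ha
  have hs' : G'.s (f.fE e) = v' := laxs e v' hfa
  obtain ⟨e₂, he₂, hfe₂⟩ := (surj b v' hb).1 (f.fE e) hs'
  have hfb : f.fV (G.s e₂) = some v' := by rw [he₂]; exact hb
  have : e = e₂ := injs e e₂ (by rw [hfa]; rfl) (by rw [hfb]; rfl)
    hfe₂.symm (by rw [hfa, hfb])
  exact hne (by rw [← he, this, he₂])

lemma no_tgt {G G' : TGr} (f : TPreHom G G') (hf : TFlagBij f)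
    (a b : G.V) (v' : G'.V) (ha : f.fV a = some v') (hb : f.fV b = some v')
    (hne : a ≠ b) : ∀ e, G.t e ≠ a := by
  intro e he
  obtain ⟨⟨_, laxt⟩, ⟨_, injt⟩, surj⟩ := hf
  have hfa : f.fV (G.t e) = some v' := by rw [he]; exact ha
  have ht' : G'.t (f.fE e) = v' := laxt e v' hfa
  obtain ⟨e₂, he₂, hfe₂⟩ := (surj b v' hb).2 (f.fE e) ht'
  have hfb : f.fV (G.t e₂) = some v' := by rw [he₂]; exact hb
  have : e = e₂ := injt e e₂ (by rw [hfa]; rfl) (by rw [hfb]; rfl)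
    hfe₂.symm (by rw [hfa, hfb])
  exact hne (by rw [← he, this, he₂])

lemma deg_zero {G G' : TGr} (f : TPreHom G G') (hf : TFlagBij f)
    (a b : G.V) (v' : G'.V) (ha : f.fV a = some v') (hb : f.fV b = some v')
    (hne : a ≠ b) : G.deg a = 0 := by
  have h1 : IsEmpty {e : G.E // G.s e = a} :=
    ⟨fun ⟨e, he⟩ => no_src f hf a b v' ha hb hne e he⟩
  have h2 : IsEmpty {e : G.E // G.t e = a} :=
    ⟨fun ⟨e, he⟩ => no_tgt f hf a b v' ha hb hne e he⟩
  simp [TGr.deg, Nat.card_of_isEmpty]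

theorem flagBij_eq_image_deg_zero {G G' : TGr} (f : TPreHom G G')
    (hf : TFlagBij f) (v₁ v₂ : G.V) (v' : G'.V)
    (h₁ : f.fV v₁ = some v') (h₂ : f.fV v₂ = some v') (hne : v₁ ≠ v₂) :
    G.deg v₁ = 0 ∧ G.deg v₂ = 0 := by
  exact ⟨deg_zero f hf v₁ v₂ v' h₁ h₂ hne, deg_zero f hf v₂ v₁ v' h₂ h₁ hne.symm⟩
end

section
/- Each connected component of the pairing graph of a partitioning span determines an edge-disjoint path in the boundary graph B; for a component which is a path (not a cycle), if its first vertex has positive polarity the corresponding path in B starts at ∂ and if negative it starts at ∂̄, and if its last vertex is positive the path ends at ∂̄ and if negative it ends at ∂. -/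
/-- A graph with circles: vertices `V`, edges `E` (with total source and target
maps) and circles `O` (closed edges without endpoints). -/
structure Gr : Type 1 where
  V : Type
  E : Type
  O : Type
  s : E → V
  t : E → V

/-- The arcs of a graph with circles: edges together with circles. -/
abbrev Gr.A (G : Gr) : Type := G.E ⊕ G.O

/-- Raw data of a morphism of graphs with circles: a partial vertex map
(modelled via `Option`) and a total arc map. -/
structure PreHom (G G' : Gr) : Type where
  fV : G.V → Option G'.V
  fA : G.A → G'.A

/-- The (partial) edge component of a morphism: defined on an edge exactly when
its image is again an edge (rather than a circle). -/
def PreHom.fE {G G' : Gr} (f : PreHom G G') (e : G.E) : Option G'.E :=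
  match f.fA (Sum.inl e) with
  | Sum.inl e' => some e'
  | Sum.inr _ => none

/-- The identity morphism. -/
def PreHom.id (G : Gr) : PreHom G G := ⟨some, fun a => a⟩

/-- Pointwise composition of morphism data. -/
def PreHom.comp {G H J : Gr} (g : PreHom H J) (f : PreHom G H) : PreHom G J :=
  ⟨fun v => (f.fV v).bind g.fV, g.fA ∘ f.fA⟩

/-- Flag surjectivity of the underlying graph morphism. -/
def FlagSurj {G G' : Gr} (f : PreHom G G') : Prop :=
  ∀ v v', f.fV v = some v' →
    (∀ e', G'.s e' = v' → ∃ e, G.s e = v ∧ f.fE e = some e') ∧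
    (∀ e', G'.t e' = v' → ∃ e, G.t e = v ∧ f.fE e = some e')

/-- Flag injectivity of the underlying graph morphism. -/
def FlagInj {G G' : Gr} (f : PreHom G G') : Prop :=
  (∀ e₁ e₂, (f.fV (G.s e₁)).isSome → (f.fV (G.s e₂)).isSome →
      f.fE e₁ = f.fE e₂ → f.fV (G.s e₁) = f.fV (G.s e₂) → e₁ = e₂) ∧
  (∀ e₁ e₂, (f.fV (G.t e₁)).isSome → (f.fV (G.t e₂)).isSome →
      f.fE e₁ = f.fE e₂ → f.fV (G.t e₁) = f.fV (G.t e₂) → e₁ = e₂)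

/-- `f` is a morphism of graphs with circles: the arc map sends no circle to an
edge; lax naturality for source and target (whenever the vertex map is defined
on an endpoint of an edge, the edge is sent to an edge with the corresponding
endpoint); and flag surjectivity of the underlying graph morphism. -/
def IsHom {G G' : Gr} (f : PreHom G G') : Prop :=
  (∀ o : G.O, ∃ o', f.fA (Sum.inr o) = Sum.inr o') ∧
  (∀ e v', f.fV (G.s e) = some v' → ∃ e', f.fE e = some e' ∧ G'.s e' = v') ∧
  (∀ e v', f.fV (G.t e) = some v' → ∃ e', f.fE e = some e' ∧ G'.t e' = v') ∧
  FlagSurj f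

/-- `f` is an embedding: a morphism which is additionally injective on defined
vertices, injective on circles, and flag bijective. -/
def IsEmb {G G' : Gr} (f : PreHom G G') : Prop :=
  IsHom f ∧
  (∀ v₁ v₂ v', f.fV v₁ = some v' → f.fV v₂ = some v' → v₁ = v₂) ∧
  (∀ o₁ o₂ : G.O, f.fA (Sum.inr o₁) = f.fA (Sum.inr o₂) → o₁ = o₂) ∧
  FlagInj f

/-- The boundary graph on an edge set `EB` with polarity `pol`: two vertices
`∂ = true` and `∂̄ = false`, no circles, and every edge going between the two
vertices (`s e = pol e`, `t e = ¬ pol e`). -/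
def bGr (EB : Type) (pol : EB → Bool) : Gr :=
  ⟨Bool, EB, Empty, fun e => pol e, fun e => !pol e⟩

/-- A partitioning span `L ←l− B −c→ C`: `B` a boundary graph, `l` and `c`
embeddings, `l` defined on `∂` but not `∂̄`, and `c` defined on `∂̄` but not
`∂`. -/
def IsPartSpan {EB : Type} {pol : EB → Bool} {L C : Gr}
    (l : PreHom (bGr EB pol) L) (c : PreHom (bGr EB pol) C) : Prop :=
  IsEmb l ∧ IsEmb c ∧
  (l.fV true).isSome ∧ l.fV false = none ∧
  c.fV true = none ∧ (c.fV false).isSome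

/-- Two distinct boundary edges are `paired` by a map out of the boundary graph
if they are identified by its arc component (forming a self-loop). For the left
leg `l` of a partitioning span these are the *blue* edges of the pairing graph;
for the right leg `c`, the *red* edges. -/
def paired {EB : Type} {pol : EB → Bool} {L : Gr}
    (l : PreHom (bGr EB pol) L) (e₁ e₂ : EB) : Prop :=
  e₁ ≠ e₂ ∧ l.fA (Sum.inl e₁) = l.fA (Sum.inl e₂)

lemma paired_pol_ne {EB : Type} {pol : EB → Bool} {L : Gr}
    {l : PreHom (bGr EB pol) L} (hemb : IsEmb l) {b : Bool}
    (hb : (l.fV b).isSome) {e₁ e₂ : EB} (hp : paired l e₁ e₂)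
    (h₁ : pol e₁ = b) (h₂ : pol e₂ = b) : False := by
  obtain ⟨hne, hfa⟩ := hp
  have hfe : l.fE e₁ = l.fE e₂ := by unfold PreHom.fE; rw [hfa]
  have hs₁ : (bGr EB pol).s e₁ = b := h₁
  have hs₂ : (bGr EB pol).s e₂ = b := h₂
  exact hne (hemb.2.2.2.1 e₁ e₂ (by rw [hs₁]; exact hb) (by rw [hs₂]; exact hb)
    hfe (by rw [hs₁, hs₂]))

/-- a connected component of the pairing graph, presented as a
directed path `es` (a duplicate-free list of boundary edges in which each
vertex is followed by its blue partner if it is positive and by its red partner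
if it is negative), determines an edge-disjoint path in the boundary graph `B`:
each edge is traversed from its source to its target and the target of each
edge is the source of the next; if the first vertex is positive the path starts
at `∂` (and at `∂̄` if negative), and if the last vertex is positive the path
ends at `∂̄` (and at `∂` if negative). -/
theorem pairing_component_is_path_in_B {EB : Type} {pol : EB → Bool}
    {L C : Gr} (l : PreHom (bGr EB pol) L) (c : PreHom (bGr EB pol) C)
    (h : IsPartSpan l c) (es : List EB) (hne : es ≠ []) (hnd : es.Nodup)
    (hchain : ∀ i (hi : i + 1 < es.length),
      if pol (es.get ⟨i, Nat.lt_of_succ_lt hi⟩) = true then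
        paired l (es.get ⟨i, Nat.lt_of_succ_lt hi⟩) (es.get ⟨i + 1, hi⟩)
      else
        paired c (es.get ⟨i, Nat.lt_of_succ_lt hi⟩) (es.get ⟨i + 1, hi⟩)) :
    (∀ i (hi : i + 1 < es.length),
        (bGr EB pol).t (es.get ⟨i, Nat.lt_of_succ_lt hi⟩) =
          (bGr EB pol).s (es.get ⟨i + 1, hi⟩)) ∧
    ((bGr EB pol).s (es.head hne) = true ↔ pol (es.head hne) = true) ∧
    ((bGr EB pol).t (es.getLast hne) = false ↔ pol (es.getLast hne) = true) := by
  obtain ⟨hl, hc, hlt, hlf, hct, hcf⟩ := h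
  refine ⟨fun i hi => ?_, ?_, ?_⟩
  · have := hchain i hi
    show (!pol (es.get ⟨i, Nat.lt_of_succ_lt hi⟩)) = pol (es.get ⟨i + 1, hi⟩)
    by_cases hp : pol (es.get ⟨i, Nat.lt_of_succ_lt hi⟩) = true
    · rw [if_pos hp] at this
      rw [hp]
      cases hq : pol (es.get ⟨i + 1, hi⟩)
      · rfl
      · exact absurd (paired_pol_ne hl hlt this hp hq) (by simp)
    · rw [if_neg hp] at this
      simp only [Bool.not_eq_true] at hp
      rw [hp]
      cases hq : pol (es.get ⟨i + 1, hi⟩)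
      · exact absurd (paired_pol_ne hc hcf this hp hq) (by simp)
      · rfl
  · exact Iff.rfl
  · show (!pol (es.getLast hne)) = false ↔ _
    cases pol (es.getLast hne) <;> simp
end

section
/- In the pushout candidate G of a partitioning span, the source map defined by cases from L and C is a well-defined partial function: if two edges of L are identified in G and both have source ≠ ∂, or an edge of L and an edge of C are identified with sources ≠ ∂ and ≠ ∂̄ respectively, a contradiction arises; hence at most one clause of the definition can supply a source for any arc of G. -/
/-- The generating relation on arcs for the pushout of a partitioning span:
for each boundary edge `e`, its image in `L` is identified with its image in
`C`. The arc set of the pushout is the quotient of `A_L ⊕ A_C` by (the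
equivalence closure of) this relation. -/
def aRel {EB : Type} {pol : EB → Bool} {L C : Gr}
    (l : PreHom (bGr EB pol) L) (c : PreHom (bGr EB pol) C) :
    (L.A ⊕ C.A) → (L.A ⊕ C.A) → Prop := fun x y =>
  ∃ e : EB, x = Sum.inl (l.fA (Sum.inl e)) ∧ y = Sum.inr (c.fA (Sum.inl e))

/-- The arc set of the pushout candidate. -/
def AG {EB : Type} {pol : EB → Bool} {L C : Gr}
    (l : PreHom (bGr EB pol) L) (c : PreHom (bGr EB pol) C) : Type :=
  Quot (aRel l c)

/-- The image in the pushout of an arc of `L` (the arc component of the map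
`m : L → G`). -/
def mkL {EB : Type} {pol : EB → Bool} {L C : Gr}
    (l : PreHom (bGr EB pol) L) (c : PreHom (bGr EB pol) C) (a : L.A) :
    AG l c :=
  Quot.mk (aRel l c) (Sum.inl a)

/-- The image in the pushout of an arc of `C` (the arc component of the map
`g : C → G`). -/
def mkC {EB : Type} {pol : EB → Bool} {L C : Gr}
    (l : PreHom (bGr EB pol) L) (c : PreHom (bGr EB pol) C) (a : C.A) :
    AG l c :=
  Quot.mk (aRel l c) (Sum.inr a)

/-- The image in the pushout of a boundary edge. -/
def mkB {EB : Type} {pol : EB → Bool} {L C : Gr}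
    (l : PreHom (bGr EB pol) L) (c : PreHom (bGr EB pol) C) (e : EB) :
    AG l c :=
  mkL l c (l.fA (Sum.inl e))

/-- Two boundary edges lie in the same connected component of the pairing
graph: the equivalence closure of the union of the blue and red adjacencies. -/
def sameComp {EB : Type} {pol : EB → Bool} {L C : Gr}
    (l : PreHom (bGr EB pol) L) (c : PreHom (bGr EB pol) C) (e e' : EB) :
    Prop :=
  Relation.EqvGen (fun a b => paired l a b ∨ paired c a b) e e'

section AlternatingMatchings

variable {α : Type*} {pol : α → Bool} {M : Bool → α → α → Prop}

structure AlternatingMatchings (pol : α → Bool) (M : Bool → α → α → Prop) : Prop where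
  symm : ∀ {d x y}, M d x y → M d y x
  unique : ∀ {d x y y'}, M d x y → M d x y' → y = y'
  pol_eq_not : ∀ {d x y}, M d x y → pol y = !pol x

/-- `AltTrail M a d₀ x d`: `x` is reached from `a` by a walk whose steps alternate in colour,
starting with colour `d₀`; `d` is the colour of the next step. -/
inductive AltTrail (M : Bool → α → α → Prop) (a : α) (d₀ : Bool) : α → Bool → Prop
  | start : AltTrail M a d₀ a d₀
  | step {x y : α} {d : Bool} : AltTrail M a d₀ x d → M d x y → AltTrail M a d₀ y (!d)

namespace AltTrail

variable {a x : α} {d₀ d : Bool}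

theorem xor_pol (hM : AlternatingMatchings pol M) (ht : AltTrail M a d₀ x d) :
    xor (pol x) d = xor (pol a) d₀ := by
  induction ht with
  | start => rfl
  | step _ hxy ih => rw [hM.pol_eq_not hxy, Bool.not_xor_not, ih]

theorem eq_start_or_matched (hM : AlternatingMatchings pol M) (ht : AltTrail M a d₀ x d) :
    (x = a ∧ d = d₀) ∨ ∃ y, M (!d) x y := by
  cases ht with
  | start => exact .inl ⟨rfl, rfl⟩
  | step _ hyx => exact .inr ⟨_, by rw [Bool.not_not]; exact hM.symm hyx⟩

theorem exists_of_matched (hM : AlternatingMatchings pol M) (ha : ∀ y, ¬ M (!d₀) a y)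
    (ht : AltTrail M a d₀ x d) {d' : Bool} {w : α} (hxw : M d' x w) :
    ∃ d'', AltTrail M a d₀ w d'' := by
  by_cases hd : d' = d
  · subst hd
    exact ⟨_, ht.step hxw⟩
  cases ht with
  | start => exact absurd (Bool.eq_not_of_ne hd ▸ hxw) (ha w)
  | step ht' hyx =>
    obtain rfl : d' = _ := by simpa using hd
    exact ⟨_, hM.unique (hM.symm hyx) hxw ▸ ht'⟩

theorem exists_of_eqvGen (hM : AlternatingMatchings pol M) (ha : ∀ y, ¬ M (!d₀) a y) {z : α}
    (haz : Relation.EqvGen (fun x y => M true x y ∨ M false x y) a z) :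
    ∃ d, AltTrail M a d₀ z d := by
  have key : ∀ x y, Relation.EqvGen (fun x y => M true x y ∨ M false x y) x y →
      ((∃ d, AltTrail M a d₀ x d) ↔ ∃ d, AltTrail M a d₀ y d) := by
    intro x y hxy
    induction hxy with
    | rel x y hxy =>
      obtain ⟨d', hxy⟩ : ∃ d', M d' x y := hxy.elim (⟨true, ·⟩) (⟨false, ·⟩)
      exact ⟨fun ⟨_, ht⟩ => ht.exists_of_matched hM ha hxy,
        fun ⟨_, ht⟩ => ht.exists_of_matched hM ha (hM.symm hxy)⟩
    | refl => rfl
    | symm _ _ _ ih => exact ih.symm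
    | trans _ _ _ _ _ ih₁ ih₂ => exact ih₁.trans ih₂
  exact (key a z haz).mp ⟨d₀, .start⟩

end AltTrail

theorem AlternatingMatchings.eq_of_unmatched (hM : AlternatingMatchings pol M) {a b : α}
    {k k' : Bool} (hab : Relation.EqvGen (fun x y => M true x y ∨ M false x y) a b)
    (ha : ∀ y, ¬ M k a y) (hb : ∀ y, ¬ M k' b y) (hpa : pol a = !k) (hpb : pol b = !k') :
    a = b := by
  obtain ⟨d, ht⟩ := AltTrail.exists_of_eqvGen hM (d₀ := !k) (by simpa using ha) hab
  rcases ht.eq_start_or_matched hM with ⟨rfl, -⟩ | ⟨y, hy⟩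
  · rfl
  have hd : d = k' := by
    by_contra hd
    exact hb y (by simpa [Bool.eq_not_of_ne hd] using hy)
  have hxor := ht.xor_pol hM
  rw [hpa, hpb, hd] at hxor
  simp at hxor

end AlternatingMatchings

section BoundaryGraph

variable {EB : Type} {pol : EB → Bool} {G : Gr} {f : PreHom (bGr EB pol) G} {v : Bool}

/-- Two boundary edges of equal polarity meet `v` at the same end, so one of the two flag
conditions applies. -/
theorem FlagInj.eq_of_fA_eq_of_pol_eq (hf : FlagInj f) (hv : (f.fV v).isSome) {a b : EB}
    (hab : f.fA (.inl a) = f.fA (.inl b)) (hpol : pol a = pol b) : a = b := by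
  have hfE : f.fE a = f.fE b := by simp only [PreHom.fE, hab]
  by_cases hsrc : pol a = v
  · exact hf.1 a b (by simpa [bGr, hsrc] using hv) (by simpa [bGr, ← hpol, hsrc] using hv) hfE
      (by simp [bGr, hpol])
  · have htgt : (!pol a) = v := by simpa using Bool.eq_not_of_ne hsrc
    exact hf.2 a b (by simpa [bGr, htgt] using hv) (by simpa [bGr, ← hpol, htgt] using hv) hfE
      (by simp [bGr, hpol])

theorem pol_eq_not_of_paired (hf : FlagInj f) (hv : (f.fV v).isSome) {a b : EB}
    (hab : paired f a b) : pol b = !pol a :=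
  Bool.eq_not_of_ne fun hpol => hab.1 (hf.eq_of_fA_eq_of_pol_eq hv hab.2 hpol.symm)

theorem eq_of_paired_of_paired (hf : FlagInj f) (hv : (f.fV v).isSome) {a b b' : EB}
    (hb : paired f a b) (hb' : paired f a b') : b = b' :=
  hf.eq_of_fA_eq_of_pol_eq hv (hb.2.symm.trans hb'.2)
    (by rw [pol_eq_not_of_paired hf hv hb, pol_eq_not_of_paired hf hv hb'])

theorem pol_ne_of_fV_ne_some_src (hf : IsHom f) (hv : (f.fV v).isSome) {b : EB} {e : G.E}
    (hb : f.fA (.inl b) = .inl e) (hs : f.fV v ≠ some (G.s e)) : pol b ≠ v := by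
  rintro rfl
  obtain ⟨w, hw⟩ := Option.isSome_iff_exists.mp hv
  obtain ⟨e', he', rfl⟩ := hf.2.1 b w hw
  obtain rfl : e = e' := by simpa [PreHom.fE, hb] using he'
  exact hs hw

theorem unmatched_of_fV_ne_some_src (hf : IsEmb f) (hv : (f.fV v).isSome) {b : EB} {e : G.E}
    (hb : f.fA (.inl b) = .inl e) (hs : f.fV v ≠ some (G.s e)) :
    pol b = !v ∧ ∀ y, ¬ paired f b y := by
  have hpol := pol_ne_of_fV_ne_some_src hf.1 hv hb hs
  refine ⟨Bool.eq_not_of_ne hpol, fun y hy => ?_⟩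
  have hy' := pol_ne_of_fV_ne_some_src hf.1 hv (hy.2.symm.trans hb) hs
  rw [pol_eq_not_of_paired hf.2.2.2 hv hy] at hy'
  cases v <;> simp_all

end BoundaryGraph

section Pushout

variable {EB : Type} {pol : EB → Bool} {L C : Gr}
  {l : PreHom (bGr EB pol) L} {c : PreHom (bGr EB pol) C}

def pairing (l : PreHom (bGr EB pol) L) (c : PreHom (bGr EB pol) C) : Bool → EB → EB → Prop
  | true => paired l
  | false => paired c

theorem IsPartSpan.alternatingMatchings_pairing (h : IsPartSpan l c) :
    AlternatingMatchings pol (pairing l c) where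
  symm := by
    rintro (_ | _) x y ⟨hne, hxy⟩ <;> exact ⟨hne.symm, hxy.symm⟩
  unique := by
    rintro (_ | _) x y y' hy hy'
    exacts [eq_of_paired_of_paired h.2.1.2.2.2 h.2.2.2.2.2 hy hy',
      eq_of_paired_of_paired h.1.2.2.2 h.2.2.1 hy hy']
  pol_eq_not := by
    rintro (_ | _) x y hxy
    exacts [pol_eq_not_of_paired h.2.1.2.2.2 h.2.2.2.2.2 hxy,
      pol_eq_not_of_paired h.1.2.2.2 h.2.2.1 hxy]

def IsBoundaryImage (l : PreHom (bGr EB pol) L) (c : PreHom (bGr EB pol) C) (b : EB)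
    (x : L.A ⊕ C.A) : Prop :=
  x = .inl (l.fA (.inl b)) ∨ x = .inr (c.fA (.inl b))

/-- An explicit description of the equivalence relation generated by `aRel`. -/
def BoundaryLinked (l : PreHom (bGr EB pol) L) (c : PreHom (bGr EB pol) C)
    (x y : L.A ⊕ C.A) : Prop :=
  x = y ∨ ∃ b b', sameComp l c b b' ∧ IsBoundaryImage l c b x ∧ IsBoundaryImage l c b' y

theorem sameComp_of_isBoundaryImage {b b' : EB} {x : L.A ⊕ C.A}
    (hb : IsBoundaryImage l c b x) (hb' : IsBoundaryImage l c b' x) : sameComp l c b b' := by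
  rcases eq_or_ne b b' with rfl | hne
  · exact .refl _
  rcases hb with rfl | rfl <;> rcases hb' with h | h <;> simp only [Sum.inl.injEq,
    Sum.inr.injEq, reduceCtorEq] at h
  · exact .rel _ _ (.inl ⟨hne, h⟩)
  · exact .rel _ _ (.inr ⟨hne, h⟩)

theorem equivalence_boundaryLinked : Equivalence (BoundaryLinked l c) where
  refl _ := .inl rfl
  symm := by
    rintro x y (rfl | ⟨b, b', hbb', hx, hy⟩)
    exacts [.inl rfl, .inr ⟨b', b, .symm _ _ hbb', hy, hx⟩]
  trans := by
    rintro x y z (rfl | ⟨b₁, b₂, h₁₂, hx, hy⟩) (rfl | ⟨b₃, b₄, h₃₄, hy', hz⟩)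
    · exact .inl rfl
    · exact .inr ⟨b₃, b₄, h₃₄, hy', hz⟩
    · exact .inr ⟨b₁, b₂, h₁₂, hx, hy⟩
    · exact .inr ⟨b₁, b₄,
        .trans _ _ _ h₁₂ (.trans _ _ _ (sameComp_of_isBoundaryImage hy hy') h₃₄), hx, hz⟩

theorem boundaryLinked_of_mk_eq {x y : L.A ⊕ C.A}
    (hxy : Quot.mk (aRel l c) x = Quot.mk (aRel l c) y) : BoundaryLinked l c x y :=
  equivalence_boundaryLinked.eqvGen_iff.mp <|
    Relation.EqvGen.mono (fun _ _ ⟨b, hx, hy⟩ => .inr ⟨b, b, .refl _, .inl hx, .inr hy⟩) _ _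
      (Quot.eq.mp hxy)

theorem isBoundaryImage_inl_iff {b : EB} {a : L.A} :
    IsBoundaryImage l c b (.inl a) ↔ l.fA (.inl b) = a := by
  simp [IsBoundaryImage, eq_comm]

theorem isBoundaryImage_inr_iff {b : EB} {a : C.A} :
    IsBoundaryImage l c b (.inr a) ↔ c.fA (.inl b) = a := by
  simp [IsBoundaryImage, eq_comm]

theorem IsPartSpan.eq_of_mkL_eq (h : IsPartSpan l c) {e₁ e₂ : L.E}
    (he : mkL l c (.inl e₁) = mkL l c (.inl e₂))
    (hs₁ : l.fV true ≠ some (L.s e₁)) (hs₂ : l.fV true ≠ some (L.s e₂)) : e₁ = e₂ := by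
  obtain he | ⟨b₁, b₂, hb, hb₁, hb₂⟩ := boundaryLinked_of_mk_eq he
  · simpa using he
  rw [isBoundaryImage_inl_iff] at hb₁ hb₂
  obtain ⟨hp₁, hu₁⟩ := unmatched_of_fV_ne_some_src h.1 h.2.2.1 hb₁ hs₁
  obtain ⟨hp₂, hu₂⟩ := unmatched_of_fV_ne_some_src h.1 h.2.2.1 hb₂ hs₂
  obtain rfl := h.alternatingMatchings_pairing.eq_of_unmatched (k := true) (k' := true)
    hb hu₁ hu₂ hp₁ hp₂
  exact Sum.inl.inj (hb₁.symm.trans hb₂)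

theorem IsPartSpan.eq_of_mkC_eq (h : IsPartSpan l c) {e₁ e₂ : C.E}
    (he : mkC l c (.inl e₁) = mkC l c (.inl e₂))
    (hs₁ : c.fV false ≠ some (C.s e₁)) (hs₂ : c.fV false ≠ some (C.s e₂)) : e₁ = e₂ := by
  obtain he | ⟨b₁, b₂, hb, hb₁, hb₂⟩ := boundaryLinked_of_mk_eq he
  · simpa using he
  rw [isBoundaryImage_inr_iff] at hb₁ hb₂
  obtain ⟨hp₁, hu₁⟩ := unmatched_of_fV_ne_some_src h.2.1 h.2.2.2.2.2 hb₁ hs₁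
  obtain ⟨hp₂, hu₂⟩ := unmatched_of_fV_ne_some_src h.2.1 h.2.2.2.2.2 hb₂ hs₂
  obtain rfl := h.alternatingMatchings_pairing.eq_of_unmatched (k := false) (k' := false)
    hb hu₁ hu₂ hp₁ hp₂
  exact Sum.inl.inj (hb₁.symm.trans hb₂)

theorem IsPartSpan.mkL_ne_mkC (h : IsPartSpan l c) {e₁ : L.E} {e₂ : C.E}
    (hs₁ : l.fV true ≠ some (L.s e₁)) (hs₂ : c.fV false ≠ some (C.s e₂)) :
    mkL l c (.inl e₁) ≠ mkC l c (.inl e₂) := by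
  intro he
  obtain he | ⟨b₁, b₂, hb, hb₁, hb₂⟩ := boundaryLinked_of_mk_eq he
  · simp at he
  rw [isBoundaryImage_inl_iff] at hb₁
  rw [isBoundaryImage_inr_iff] at hb₂
  obtain ⟨hp₁, hu₁⟩ := unmatched_of_fV_ne_some_src h.1 h.2.2.1 hb₁ hs₁
  obtain ⟨hp₂, hu₂⟩ := unmatched_of_fV_ne_some_src h.2.1 h.2.2.2.2.2 hb₂ hs₂
  obtain rfl := h.alternatingMatchings_pairing.eq_of_unmatched (k := true) (k' := false)
    hb hu₁ hu₂ hp₁ hp₂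
  exact absurd (hp₁.symm.trans hp₂) (by decide)

end Pushout

/-- the case-defined source map of the pushout candidate is a
well-defined partial function. If two edges of `L`, both with source different
from (the image of) `∂`, are identified in the pushout then they have the same
source; and an edge of `L` with source ≠ `∂` can never be identified with an
edge of `C` with source ≠ `∂̄`. Hence at most one clause of the definition
supplies a source for any arc of the pushout. -/
theorem pushout_source_well_defined
    {EB : Type} {pol : EB → Bool} {L C : Gr}
    (l : PreHom (bGr EB pol) L) (c : PreHom (bGr EB pol) C)
    (h : IsPartSpan l c) :
    (∀ e₁ e₂ : L.E,
        mkL l c (Sum.inl e₁) = mkL l c (Sum.inl e₂) →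
        l.fV true ≠ some (L.s e₁) → l.fV true ≠ some (L.s e₂) →
        L.s e₁ = L.s e₂) ∧
    (∀ e₁ e₂ : C.E,
        mkC l c (Sum.inl e₁) = mkC l c (Sum.inl e₂) →
        c.fV false ≠ some (C.s e₁) → c.fV false ≠ some (C.s e₂) →
        C.s e₁ = C.s e₂) ∧
    (∀ (e₁ : L.E) (e₂ : C.E),
        mkL l c (Sum.inl e₁) = mkC l c (Sum.inl e₂) →
        l.fV true ≠ some (L.s e₁) → c.fV false ≠ some (C.s e₂) →
        False) :=
  ⟨fun _ _ he hs₁ hs₂ => congrArg L.s (h.eq_of_mkL_eq he hs₁ hs₂),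
    fun _ _ he hs₁ hs₂ => congrArg C.s (h.eq_of_mkC_eq he hs₁ hs₂),
    fun _ _ he hs₁ hs₂ => h.mkL_ne_mkC hs₁ hs₂ he⟩
end
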